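/- arXiv:math/0311327 — 8 statements merged into one kernel-verified Lean document; each statement's English description precedes it below -/
import Mathlib

section
/- Let G be a group and M a submonoid of G such that M generates G and any two elements of M admit a right lcm in M (i.e., for all x, y in M there exists z in M that is a right multiple of both x and y, and every common right multiple of x and y in M is a right multiple of z). Then an element z of G has finite order (greater than 0) if and only if z = x * t * x⁻¹ for some x in M and some t in M of the same finite order. Equivalently: the torsion elements of G are exactly the elements x t x⁻¹ with x in M and t a torsion element of M. -/
/-- `z` is a right lcm of `x` and `y` within the submonoid `M` of the group `G`:
`z` lies in `M`, is a right multiple (within `M`) of `x` and of `y`, and every common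
right multiple of `x` and `y` lying in `M` is a right multiple of `z`. -/
def IsRightLcmIn {G : Type*} [Group G] (M : Submonoid G) (x y z : G) : Prop :=
  z ∈ M ∧ (∃ a ∈ M, z = x * a) ∧ (∃ b ∈ M, z = y * b) ∧
    ∀ w ∈ M, (∃ a ∈ M, w = x * a) → (∃ b ∈ M, w = y * b) → ∃ c ∈ M, w = z * c

/-- Every element of `G` is a right fraction `a * b⁻¹`, phrased as: there is `b ∈ M`
with `g * b ∈ M`. -/
lemma exists_denom {G : Type*} [Group G] (M : Submonoid G)
    (hgen : Subgroup.closure (M : Set G) = ⊤)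
    (hlcm : ∀ x ∈ M, ∀ y ∈ M, ∃ z, IsRightLcmIn M x y z)
    (g : G) : ∃ b ∈ M, g * b ∈ M := by
  have hg : g ∈ Subgroup.closure (M : Set G) := by rw [hgen]; trivial
  induction hg using Subgroup.closure_induction with
  | mem x hx => exact ⟨1, M.one_mem, by simpa using hx⟩
  | one => exact ⟨1, M.one_mem, by simpa using M.one_mem⟩
  | mul x y hx hy ihx ihy =>
      obtain ⟨b, hb, hxb⟩ := ihx
      obtain ⟨d, hd, hyd⟩ := ihy
      obtain ⟨w, hw, ⟨u, hu, hwu⟩, ⟨v, hv, hwv⟩, _⟩ := hlcm b hb (y * d) hyd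
      refine ⟨d * v, mul_mem hd hv, ?_⟩
      have h2 : x * y * (d * v) = x * (b * u) := by
        rw [mul_assoc, ← mul_assoc y, ← hwv, hwu]
      rw [h2, ← mul_assoc]
      exact mul_mem hxb hu
  | inv x hx ih =>
      obtain ⟨b, hb, hxb⟩ := ih
      exact ⟨x * b, hxb, by simpa using hb⟩

/-- Iterated right lcm of finitely many elements of `M`. -/
lemma exists_multi_lcm {G : Type*} [Group G] (M : Submonoid G)
    (hlcm : ∀ x ∈ M, ∀ y ∈ M, ∃ z, IsRightLcmIn M x y z)
    (g : ℕ → G) : ∀ n : ℕ, (∀ k < n, g k ∈ M) →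
      ∃ x ∈ M, (∀ k < n, ∃ m ∈ M, x = g k * m) ∧
        ∀ w ∈ M, (∀ k < n, ∃ m ∈ M, w = g k * m) → ∃ t ∈ M, w = x * t := by
  intro n
  induction n with
  | zero =>
      exact fun _ => ⟨1, M.one_mem, fun k hk => absurd hk (by omega),
        fun w hw _ => ⟨w, hw, by simp⟩⟩
  | succ n ih =>
      intro hg
      obtain ⟨x, hx, hmul, huniv⟩ := ih (fun k hk => hg k (by omega))
      obtain ⟨zl, hzl, ⟨a, ha, hza⟩, ⟨b, hb, hzb⟩, hzu⟩ := hlcm x hx (g n) (hg n (by omega))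
      refine ⟨zl, hzl, ?_, ?_⟩
      · intro k hk
        rcases Nat.lt_succ_iff_lt_or_eq.mp hk with hk' | rfl
        · obtain ⟨m, hm, hxm⟩ := hmul k hk'
          exact ⟨m * a, mul_mem hm ha, by rw [hza, hxm, mul_assoc]⟩
        · exact ⟨b, hb, hzb⟩
      · intro w hw hwk
        have h1 : ∃ a ∈ M, w = x * a := huniv w hw (fun k hk => hwk k (by omega))
        exact hzu w hw h1 (hwk n (by omega))

/-- The torsion elements of `G` are exactly the elements `x * t * x⁻¹` with `x ∈ M`
and `t` a torsion element of `M` of the same order. -/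
theorem torsion_of_group_of_fractions {G : Type*} [Group G] (M : Submonoid G)
    (hgen : Subgroup.closure (M : Set G) = ⊤)
    (hlcm : ∀ x ∈ M, ∀ y ∈ M, ∃ z, IsRightLcmIn M x y z)
    (z : G) (p : ℕ) (hp : 0 < p) :
    z ^ p = 1 ↔ ∃ x ∈ M, ∃ t ∈ M, t ^ p = 1 ∧ z = x * t * x⁻¹ := by
  constructor
  · intro hzp
    -- find a common denominator c with z^k * c ∈ M for all k < p
    have hc : ∀ n : ℕ, ∃ c ∈ M, ∀ k < n, z ^ k * c ∈ M := by
      intro n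
      induction n with
      | zero => exact ⟨1, one_mem M, fun k hk => absurd hk (by omega)⟩
      | succ n ih =>
          obtain ⟨c, hcM, hck⟩ := ih
          obtain ⟨b, hb, hgb⟩ := exists_denom M hgen hlcm (z ^ n * c)
          refine ⟨c * b, mul_mem hcM hb, fun k hk => ?_⟩
          rcases Nat.lt_succ_iff_lt_or_eq.mp hk with hk' | rfl
          · rw [← mul_assoc]; exact mul_mem (hck k hk') hb
          · rw [← mul_assoc]; exact hgb
    obtain ⟨c, hcM, hck⟩ := hc p
    -- z^k * c ∈ M for ALL k, by periodicity
    have hall : ∀ k : ℕ, z ^ k * c ∈ M := by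
      intro k
      rw [pow_eq_pow_mod k hzp]
      exact hck _ (Nat.mod_lt _ hp)
    obtain ⟨x, hx, hmul, huniv⟩ := exists_multi_lcm M hlcm (fun k => z ^ k * c) p
      (fun k _ => hall k)
    -- z * x is a right multiple of each z^k * c, k < p
    have hzx : ∀ k < p, ∃ m ∈ M, z * x = z ^ k * c * m := by
      intro k hk
      rcases Nat.eq_zero_or_pos k with rfl | hkpos
      · obtain ⟨m, hm, hxm⟩ := hmul (p - 1) (by omega)
        refine ⟨m, hm, ?_⟩
        rw [hxm, pow_zero, one_mul, ← mul_assoc, ← mul_assoc, ← pow_succ',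
          show p - 1 + 1 = p by omega, hzp, one_mul]
      · obtain ⟨m, hm, hxm⟩ := hmul (k - 1) (by omega)
        refine ⟨m, hm, ?_⟩
        rw [hxm, ← mul_assoc, ← mul_assoc, ← pow_succ', show k - 1 + 1 = k by omega]
    have hzxM : z * x ∈ M := by
      obtain ⟨m, hm, he⟩ := hzx 0 hp
      rw [he, pow_zero, one_mul]
      exact mul_mem hcM hm
    obtain ⟨t, ht, hxt⟩ := huniv (z * x) hzxM hzx
    refine ⟨x, hx, t, ht, ?_, ?_⟩
    · have htx : t = x⁻¹ * z * x := by
        rw [mul_assoc, hxt]; group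
      rw [htx, show x⁻¹ * z * x = x⁻¹ * z * (x⁻¹)⁻¹ by rw [inv_inv], conj_pow, inv_inv, hzp]
      group
    · rw [← hxt]; group
  · rintro ⟨x, hx, t, ht, htp, rfl⟩
    rw [conj_pow, htp]
    group
end

section
/- Let G be a group and M a submonoid of G such that M generates G and any two elements of M admit a right lcm in M. Then G is torsion free (no element other than 1 has finite order) if and only if M is torsion free (no element of M other than 1 satisfies t^p = 1 for some positive p). -/
/-- `G` is torsion free if and only if `M` is torsion free. -/
theorem torsionFree_iff_of_group_of_fractions {G : Type*} [Group G] (M : Submonoid G)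
    (hgen : Subgroup.closure (M : Set G) = ⊤)
    (hlcm : ∀ x ∈ M, ∀ y ∈ M, ∃ z, IsRightLcmIn M x y z) :
    (∀ z : G, (∃ p : ℕ, 0 < p ∧ z ^ p = 1) → z = 1) ↔
      (∀ t ∈ M, (∃ p : ℕ, 0 < p ∧ t ^ p = 1) → t = 1) := by
  constructor
  · intro hG t _ ht
    exact hG t ht
  · intro hM z hz
    obtain ⟨p, hp, hzp⟩ := hz
    -- Step A: every element of G is a right fraction a * b⁻¹ with a, b ∈ M
    have fracA : ∀ g : G, ∃ a ∈ M, ∃ b ∈ M, g = a * b⁻¹ := by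
      intro g
      have hg : g ∈ Subgroup.closure (M : Set G) := hgen ▸ Subgroup.mem_top g
      induction hg using Subgroup.closure_induction with
      | mem x hx => exact ⟨x, hx, 1, M.one_mem, by simp⟩
      | one => exact ⟨1, M.one_mem, 1, M.one_mem, by simp⟩
      | mul x y _ _ ihx ihy =>
          obtain ⟨a, ha, b, hb, rfl⟩ := ihx
          obtain ⟨c, hc, d, hd, rfl⟩ := ihy
          obtain ⟨zl, hzlM, ⟨u, hu, hzu⟩, ⟨v, hv, hzv⟩, -⟩ := hlcm b hb c hc
          refine ⟨a * u, M.mul_mem ha hu, d * v, M.mul_mem hd hv, ?_⟩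
          have hc' : c = b * u * v⁻¹ := by rw [← hzu, hzv]; group
          rw [hc']; group
      | inv x _ ih =>
          obtain ⟨a, ha, b, hb, rfl⟩ := ih
          exact ⟨b, hb, a, ha, by group⟩
    -- Step B: common right denominator for all powers z^i, i < n
    have fracB : ∀ n : ℕ, ∃ d ∈ M, ∀ i < n, z ^ i * d ∈ M := by
      intro n
      induction n with
      | zero => exact ⟨1, M.one_mem, fun i hi => absurd hi (Nat.not_lt_zero i)⟩
      | succ n ih =>
          obtain ⟨d, hd, hdi⟩ := ih
          obtain ⟨a, ha, b, hb, hab⟩ := fracA (z ^ n)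
          obtain ⟨L, hLM, ⟨u, hu, hLu⟩, ⟨v, hv, hLv⟩, -⟩ := hlcm d hd b hb
          refine ⟨L, hLM, ?_⟩
          intro i hi
          rcases Nat.lt_succ_iff_lt_or_eq.mp hi with h | rfl
          · rw [hLu, ← mul_assoc]
            exact M.mul_mem (hdi i h) hu
          · rw [hLv, hab]
            have : a * b⁻¹ * b * v = a * v := by group
            rw [← mul_assoc, this]
            exact M.mul_mem ha hv
    -- Step C: right lcm of finitely many elements of M
    have lcmC : ∀ (n : ℕ) (m : ℕ → G), (∀ i < n, m i ∈ M) →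
        ∃ L ∈ M, (∀ i < n, ∃ u ∈ M, L = m i * u) ∧
          ∀ w ∈ M, (∀ i < n, ∃ u ∈ M, w = m i * u) → ∃ c ∈ M, w = L * c := by
      intro n
      induction n with
      | zero =>
          intro m _
          exact ⟨1, M.one_mem, fun i hi => absurd hi (Nat.not_lt_zero i),
            fun w hw _ => ⟨w, hw, (one_mul w).symm⟩⟩
      | succ n ih =>
          intro m hm
          obtain ⟨L, hL, hmul, huniv⟩ := ih m (fun i hi => hm i (hi.trans (Nat.lt_succ_self n)))
          obtain ⟨Z, hZ, ⟨a, ha, hZa⟩, ⟨b, hb, hZb⟩, hZu⟩ :=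
            hlcm L hL (m n) (hm n (Nat.lt_succ_self n))
          refine ⟨Z, hZ, ?_, ?_⟩
          · intro i hi
            rcases Nat.lt_succ_iff_lt_or_eq.mp hi with h | rfl
            · obtain ⟨u, hu, hLu⟩ := hmul i h
              exact ⟨u * a, M.mul_mem hu ha, by rw [hZa, hLu, mul_assoc]⟩
            · exact ⟨b, hb, hZb⟩
          · intro w hw hwm
            obtain ⟨c, hc, hwc⟩ := huniv w hw (fun i hi => hwm i (hi.trans (Nat.lt_succ_self n)))
            exact hZu w hw ⟨c, hc, hwc⟩ (hwm n (Nat.lt_succ_self n))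
    -- Main argument
    obtain ⟨d, hd, hdi⟩ := fracB p
    obtain ⟨L, hL, hmul, huniv⟩ := lcmC p (fun i => z ^ i * d) hdi
    have hzL : ∀ i < p, ∃ u ∈ M, z * L = z ^ i * d * u := by
      intro i hi
      rcases Nat.eq_zero_or_pos i with rfl | hi0
      · obtain ⟨u, hu, hLu⟩ := hmul (p - 1) (by omega)
        refine ⟨u, hu, ?_⟩
        rw [hLu, ← mul_assoc, ← mul_assoc, ← pow_succ']
        have h1 : p - 1 + 1 = p := by omega
        rw [h1, hzp]
        simp
      · obtain ⟨u, hu, hLu⟩ := hmul (i - 1) (by omega)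
        refine ⟨u, hu, ?_⟩
        rw [hLu, ← mul_assoc, ← mul_assoc, ← pow_succ']
        have h1 : i - 1 + 1 = i := by omega
        rw [h1]
    have hzLM : z * L ∈ M := by
      obtain ⟨u, hu, he⟩ := hzL 0 hp
      rw [he]
      exact M.mul_mem (hdi 0 hp) hu
    obtain ⟨c, hc, hzLc⟩ := huniv (z * L) hzLM hzL
    have hz' : z = L * c * L⁻¹ := eq_mul_inv_iff_mul_eq.mpr hzLc
    have hcp : c ^ p = 1 := by
      have h2 : (L * c * L⁻¹) ^ p = 1 := by rw [← hz']; exact hzp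
      rw [conj_pow] at h2
      have h3 : c ^ p = L⁻¹ * 1 * L := by rw [← h2]; group
      rw [h3]; group
    have hc1 : c = 1 := hM c hc ⟨p, hp, hcp⟩
    rw [hc1, mul_one] at hzLc
    exact mul_right_cancel (b := L) (by rw [one_mul]; exact hzLc)
end

section
/- Let G be a group and M a submonoid of G such that M generates G and any two elements of M admit a right lcm in M. If the only invertible element of M is 1 (i.e., for x, y in M, x * y = 1 implies x = 1), then G is torsion free. -/
/-- If the only invertible element of `M` is `1`, then `G` is torsion free. -/
theorem torsionFree_of_no_invertible {G : Type*} [Group G] (M : Submonoid G)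
    (hgen : Subgroup.closure (M : Set G) = ⊤)
    (hlcm : ∀ x ∈ M, ∀ y ∈ M, ∃ z, IsRightLcmIn M x y z)
    (hinv : ∀ x ∈ M, ∀ y ∈ M, x * y = 1 → x = 1) :
    ∀ z : G, ∀ p : ℕ, 0 < p → z ^ p = 1 → z = 1 := by
  intro z p hp hzp
  -- Every element of G is a right fraction u * v⁻¹ with u, v ∈ M.
  have frac : ∀ g : G, ∃ u ∈ M, ∃ v ∈ M, g = u * v⁻¹ := by
    intro g
    have hg : g ∈ Subgroup.closure (M : Set G) := by rw [hgen]; trivial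
    induction hg using Subgroup.closure_induction with
    | mem x hx => exact ⟨x, hx, 1, M.one_mem, by simp⟩
    | one => exact ⟨1, M.one_mem, 1, M.one_mem, by simp⟩
    | mul x y _ _ hx hy =>
        obtain ⟨u, hu, v, hv, rfl⟩ := hx
        obtain ⟨s, hs, t, ht, rfl⟩ := hy
        obtain ⟨w, hw, ⟨a', ha', hwa⟩, ⟨b', hb', hwb⟩, -⟩ := hlcm v hv s hs
        refine ⟨u * a', M.mul_mem hu ha', t * b', M.mul_mem ht hb', ?_⟩
        have h2 : v * a' = s * b' := hwa.symm.trans hwb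
        have h3 : s = v * a' * b'⁻¹ := eq_mul_inv_of_mul_eq h2.symm
        rw [h3]; group
    | inv x _ hx =>
        obtain ⟨u, hu, v, hv, rfl⟩ := hx
        exact ⟨v, hv, u, hu, by group⟩
  obtain ⟨u, hu, v, hv, hz⟩ := frac z
  have hzv : z * v = u := by rw [hz]; group
  have hzvM : z * v ∈ M := hzv ▸ hu
  -- Find a ∈ M with z^k * a ∈ M for all k ≤ j.
  have step : ∀ j : ℕ, ∃ a ∈ M, ∀ k ≤ j, z ^ k * a ∈ M := by
    intro j
    induction j with
    | zero =>
        refine ⟨1, M.one_mem, ?_⟩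
        intro k hk
        have : k = 0 := Nat.le_zero.mp hk
        subst this; simpa using M.one_mem
    | succ j ih =>
        obtain ⟨a, ha, hka⟩ := ih
        have hja : z ^ j * a ∈ M := hka j le_rfl
        obtain ⟨w, hw, ⟨x, hx, hwx⟩, ⟨y, hy, hwy⟩, -⟩ := hlcm (z ^ j * a) hja v hv
        refine ⟨a * x, M.mul_mem ha hx, ?_⟩
        intro k hk
        rcases Nat.lt_or_ge k (j + 1) with h | h
        · have : z ^ k * (a * x) = (z ^ k * a) * x := by rw [mul_assoc]
          rw [this]
          exact M.mul_mem (hka k (Nat.lt_succ_iff.mp h)) hx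
        · have hkj : k = j + 1 := le_antisymm hk h
          subst hkj
          have : z ^ (j + 1) * (a * x) = z * ((z ^ j * a) * x) := by
            rw [pow_succ']; group
          rw [this, ← hwx, hwy, ← mul_assoc, hzv]
          exact M.mul_mem hu hy
  -- Iterated right lcm of finitely many elements of M.
  have flcm : ∀ (n : ℕ) (f : ℕ → G), (∀ k < n, f k ∈ M) →
      ∃ c ∈ M, (∀ k < n, ∃ s ∈ M, c = f k * s) ∧
        ∀ w ∈ M, (∀ k < n, ∃ s ∈ M, w = f k * s) → ∃ t ∈ M, w = c * t := by
    intro n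
    induction n with
    | zero =>
        intro f _
        exact ⟨1, M.one_mem, fun k hk => absurd hk (Nat.not_lt_zero k),
          fun w hw _ => ⟨w, hw, (one_mul w).symm⟩⟩
    | succ n ih =>
        intro f hf
        obtain ⟨c, hc, hmul, huniv⟩ := ih f (fun k hk => hf k (hk.trans (Nat.lt_succ_self n)))
        obtain ⟨d, hd, ⟨x, hx, hdx⟩, ⟨y, hy, hdy⟩, hdu⟩ :=
          hlcm c hc (f n) (hf n (Nat.lt_succ_self n))
        refine ⟨d, hd, ?_, ?_⟩
        · intro k hk
          rcases Nat.lt_or_ge k n with h | h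
          · obtain ⟨s, hs, hcs⟩ := hmul k h
            exact ⟨s * x, M.mul_mem hs hx, by rw [hdx, hcs, mul_assoc]⟩
          · have : k = n := le_antisymm (Nat.lt_succ_iff.mp hk) h
            subst this
            exact ⟨y, hy, hdy⟩
        · intro w hw hwk
          have h1 : ∃ s ∈ M, w = c * s :=
            huniv w hw (fun k hk => hwk k (hk.trans (Nat.lt_succ_self n)))
          exact hdu w hw h1 (hwk n (Nat.lt_succ_self n))
  obtain ⟨a, ha, hka⟩ := step (p - 1)
  have hzka : ∀ k < p, z ^ k * a ∈ M := fun k hk => hka k (by omega)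
  obtain ⟨c, hc, hmul, huniv⟩ := flcm p (fun k => z ^ k * a) hzka
  have hp1 : p - 1 + 1 = p := by omega
  have hz1 : z * z ^ (p - 1) = 1 := by rw [← pow_succ', hp1, hzp]
  obtain ⟨s, hs, hcs⟩ := hmul (p - 1) (by omega)
  have hzc : z * c = a * s := by
    rw [hcs, ← mul_assoc, ← mul_assoc, hz1, one_mul]
  have hzcM : z * c ∈ M := hzc ▸ M.mul_mem ha hs
  -- z * c is a common right multiple of all z^k * a, k < p.
  have hcom : ∀ k < p, ∃ s' ∈ M, z * c = z ^ k * a * s' := by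
    intro k hk
    cases k with
    | zero => exact ⟨s, hs, by simpa using hzc⟩
    | succ j =>
        obtain ⟨sj, hsj, hcsj⟩ := hmul j (by omega)
        refine ⟨sj, hsj, ?_⟩
        rw [hcsj, pow_succ']; group
  obtain ⟨t, ht, hct⟩ := huniv (z * c) hzcM hcom
  -- z^k * c = c * t^k for all k.
  have key : ∀ k : ℕ, z ^ k * c = c * t ^ k := by
    intro k
    induction k with
    | zero => simp
    | succ k ih =>
        rw [pow_succ' z, mul_assoc, ih, ← mul_assoc, hct, mul_assoc, ← pow_succ']
  have htp : t ^ p = 1 := by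
    have h := key p
    rw [hzp, one_mul] at h
    exact mul_left_cancel (a := c) (by rw [mul_one]; exact h.symm)
  have ht1 : t = 1 := by
    have hmulone : t * t ^ (p - 1) = 1 := by rw [← pow_succ', hp1, htp]
    exact hinv t ht (t ^ (p - 1)) (M.pow_mem ht _) hmulone
  have hzcc : z * c = c := by rw [hct, ht1, mul_one]
  exact mul_right_cancel (b := c) (by rw [one_mul]; exact hzcc)
end

section
/- Let M be a left cancellative monoid, and assume that in M we have elements x, x', x'', y₁, y₂, y'₁, y'₂ with x * y'₁ = y₁ * x', this common value being a right lcm of x and y₁, and x' * y'₂ = y₂ * x'', this common value being a right lcm of x' and y₂. Then x * (y'₁ * y'₂) = (y₁ * y₂) * x'', and this common value is a right lcm of x and y₁ * y₂. -/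
/-- `z` is a right lcm of `x` and `y` in the monoid `M`. -/
def IsRightLcm {M : Type*} [Monoid M] (x y z : M) : Prop :=
  (∃ a, z = x * a) ∧ (∃ b, z = y * b) ∧
    ∀ w, (∃ a, w = x * a) → (∃ b, w = y * b) → ∃ c, w = z * c

/-- If `x * y₁' = y₁ * x'` is a right lcm of `x` and `y₁`, and `x' * y₂' = y₂ * x''` is a
right lcm of `x'` and `y₂`, then `x * (y₁' * y₂') = (y₁ * y₂) * x''` is a right lcm of `x`
and `y₁ * y₂`. -/
theorem isRightLcm_comp {M : Type*} [Monoid M]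
    (hcancel : ∀ a b c : M, a * b = a * c → b = c)
    (x x' x'' y₁ y₂ y₁' y₂' : M)
    (h₁ : x * y₁' = y₁ * x') (hlcm₁ : IsRightLcm x y₁ (x * y₁'))
    (h₂ : x' * y₂' = y₂ * x'') (hlcm₂ : IsRightLcm x' y₂ (x' * y₂')) :
    x * (y₁' * y₂') = (y₁ * y₂) * x'' ∧ IsRightLcm x (y₁ * y₂) (x * (y₁' * y₂')) := by
  have heq : x * (y₁' * y₂') = (y₁ * y₂) * x'' := by
    rw [← mul_assoc, h₁, mul_assoc, h₂, ← mul_assoc]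
  refine ⟨heq, ⟨y₁' * y₂', rfl⟩, ⟨x'', heq⟩, ?_⟩
  rintro w ⟨a, ha⟩ ⟨b, hb⟩
  obtain ⟨c, hc⟩ := hlcm₁.2.2 w ⟨a, ha⟩ ⟨y₂ * b, by rw [hb, mul_assoc]⟩
  have hc' : x' * c = y₂ * b := by
    apply hcancel y₁
    rw [← mul_assoc, ← h₁, ← hc, hb, mul_assoc]
  obtain ⟨d, hd⟩ := hlcm₂.2.2 (x' * c) ⟨c, rfl⟩ ⟨b, hc'⟩
  have hcd : c = y₂' * d := hcancel x' _ _ (by rw [hd, mul_assoc])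
  exact ⟨d, by rw [hc, hcd, mul_assoc, mul_assoc, mul_assoc]⟩
end

section
/- Let G be a group and M a submonoid of G such that M generates G and any two elements of M admit a common right multiple in M (for all x, y in M there exist x', y' in M with x * y' = y * x'). Then every element z of G can be written as a right fraction z = x * y⁻¹ with x, y in M. -/
/-- If the submonoid `M` generates the group `G` and any two elements of `M` admit a
common right multiple in `M`, then every element of `G` is a right fraction `x * y⁻¹`
with `x, y ∈ M`. -/
theorem exists_right_fraction {G : Type*} [Group G] (M : Submonoid G)
    (hgen : Subgroup.closure (M : Set G) = ⊤)
    (hcrm : ∀ x ∈ M, ∀ y ∈ M, ∃ x' ∈ M, ∃ y' ∈ M, x * y' = y * x')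
    (z : G) :
    ∃ x ∈ M, ∃ y ∈ M, z = x * y⁻¹ := by
  have hz : z ∈ Subgroup.closure (M : Set G) := hgen ▸ Subgroup.mem_top z
  induction hz using Subgroup.closure_induction with
  | mem g hg => exact ⟨g, hg, 1, M.one_mem, by simp⟩
  | one => exact ⟨1, M.one_mem, 1, M.one_mem, by simp⟩
  | mul a b _ _ ha hb =>
    obtain ⟨x, hx, y, hy, rfl⟩ := ha
    obtain ⟨u, hu, v, hv, rfl⟩ := hb
    obtain ⟨p, hp, q, hq, heq⟩ := hcrm y hy u hu
    -- y * q = u * p, so y⁻¹ * u = q * p⁻¹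
    refine ⟨x * q, M.mul_mem hx hq, v * p, M.mul_mem hv hp, ?_⟩
    have h2 : y⁻¹ * u = q * p⁻¹ := by
      rw [inv_mul_eq_iff_eq_mul, ← mul_assoc, heq]; group
    rw [mul_inv_rev]
    calc x * y⁻¹ * (u * v⁻¹) = x * (y⁻¹ * u) * v⁻¹ := by group
      _ = x * (q * p⁻¹) * v⁻¹ := by rw [h2]
      _ = x * q * (p⁻¹ * v⁻¹) := by group
  | inv a _ ha =>
    obtain ⟨x, hx, y, hy, rfl⟩ := ha
    exact ⟨y, hy, x, hx, by group⟩
end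

section
/- Let G be a group, M a submonoid of G, and let (xᵢ)ᵢ≥1 and (yᵢ)ᵢ≥1 be sequences of elements of M such that for every i ≥ 1, xᵢ * y_{i+1} = yᵢ * x_{i+1} and this common value is a right lcm (in M) of xᵢ and yᵢ. Then for all positive integers k and ℓ, one has (x₁ ⋯ x_k) * (y_{k+1} ⋯ y_{k+ℓ}) = (y₁ ⋯ y_ℓ) * (x_{ℓ+1} ⋯ x_{ℓ+k}), and this common value is a right lcm of x₁ ⋯ x_k and y₁ ⋯ y_ℓ in M. -/
/-- `seqProd x a k` is the product `x (a+1) * x (a+2) * ⋯ * x (a+k)`. -/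
def seqProd {G : Type*} [Group G] (x : ℕ → G) (a k : ℕ) : G :=
  ((List.range k).map (fun i => x (a + 1 + i))).prod

lemma seqProd_succ {G : Type*} [Group G] (x : ℕ → G) (a k : ℕ) :
    seqProd x a (k + 1) = seqProd x a k * x (a + 1 + k) := by
  simp [seqProd, List.range_succ]

lemma seqProd_one {G : Type*} [Group G] (x : ℕ → G) (a : ℕ) :
    seqProd x a 1 = x (a + 1) := by
  simp [seqProd, List.range_succ]

lemma seqProd_mem {G : Type*} [Group G] {M : Submonoid G} {x : ℕ → G}
    (hx : ∀ i, 1 ≤ i → x i ∈ M) (a k : ℕ) : seqProd x a k ∈ M := by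
  induction k with
  | zero => simpa [seqProd] using M.one_mem
  | succ k ih => rw [seqProd_succ]; exact M.mul_mem ih (hx _ (by omega))

lemma IsRightLcmIn.swap {G : Type*} [Group G] {M : Submonoid G} {x y z : G}
    (h : IsRightLcmIn M x y z) : IsRightLcmIn M y x z :=
  ⟨h.1, h.2.2.1, h.2.1, fun w hw h1 h2 => h.2.2.2 w hw h2 h1⟩

lemma lcm_ext {G : Type*} [Group G] {M : Submonoid G} {x y₁ y₂ a b c d : G}
    (ha : a ∈ M) (hb : b ∈ M) (hc : c ∈ M) (hd : d ∈ M) (hy₂ : y₂ ∈ M)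
    (e1 : x * a = y₁ * c) (e2 : c * b = y₂ * d)
    (h1 : IsRightLcmIn M x y₁ (x * a)) (h2 : IsRightLcmIn M c y₂ (c * b)) :
    x * (a * b) = (y₁ * y₂) * d ∧ IsRightLcmIn M x (y₁ * y₂) (x * (a * b)) := by
  have key : x * (a * b) = (y₁ * y₂) * d := by
    rw [← mul_assoc, e1, mul_assoc, e2, ← mul_assoc]
  refine ⟨key, ?_, ⟨a * b, M.mul_mem ha hb, rfl⟩, ⟨d, hd, key⟩, ?_⟩
  · rw [← mul_assoc]; exact M.mul_mem h1.1 hb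
  · rintro w hw ⟨p, hp, rfl⟩ ⟨q, hq, hq2⟩
    obtain ⟨e, he, he2⟩ := h1.2.2.2 (x * p) hw ⟨p, hp, rfl⟩
      ⟨y₂ * q, M.mul_mem hy₂ hq, by rw [hq2, mul_assoc]⟩
    have hce : c * e = y₂ * q := by
      have : y₁ * (c * e) = y₁ * (y₂ * q) := by
        rw [← mul_assoc, ← e1, ← he2, hq2, mul_assoc]
      exact mul_left_cancel this
    obtain ⟨f, hf, hf2⟩ := h2.2.2.2 (c * e) (M.mul_mem hc he) ⟨e, he, rfl⟩ ⟨q, hq, hce⟩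
    have hef : e = b * f := by
      have : c * e = c * (b * f) := by rw [hf2, mul_assoc]
      exact mul_left_cancel this
    exact ⟨f, hf, by rw [he2, hef, ← mul_assoc, ← mul_assoc]⟩

lemma row {G : Type*} [Group G] {M : Submonoid G} {x y : ℕ → G}
    (hx : ∀ i, 1 ≤ i → x i ∈ M) (hy : ∀ i, 1 ≤ i → y i ∈ M)
    (hrel : ∀ i, 1 ≤ i → x i * y (i + 1) = y i * x (i + 1))
    (hlcm : ∀ i, 1 ≤ i → IsRightLcmIn M (x i) (y i) (x i * y (i + 1)))
    (a l : ℕ) (hl : 1 ≤ l) :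
    x (a + 1) * seqProd y (a + 1) l = seqProd y a l * x (a + 1 + l) ∧
      IsRightLcmIn M (x (a + 1)) (seqProd y a l) (x (a + 1) * seqProd y (a + 1) l) := by
  induction l, hl using Nat.le_induction with
  | base =>
    rw [seqProd_one, seqProd_one]
    have e := hrel (a + 1) (by omega)
    have h := hlcm (a + 1) (by omega)
    constructor
    · simpa using e
    · simpa using h
  | succ l hl ih =>
    obtain ⟨e1, h1⟩ := ih
    have e2 := hrel (a + 1 + l) (by omega)
    have h2 := hlcm (a + 1 + l) (by omega)
    rw [e2] at h2
    have := lcm_ext (M := M) (x := x (a + 1)) (y₁ := seqProd y a l)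
      (y₂ := y (a + 1 + l)) (a := seqProd y (a + 1) l) (b := y (a + 1 + l + 1))
      (c := x (a + 1 + l)) (d := x (a + 1 + l + 1))
      (seqProd_mem hy _ _) (hy _ (by omega)) (hx _ (by omega)) (hx _ (by omega))
      (hy _ (by omega)) e1 (by rw [e2]) h1 (by rw [e2]; exact h2)
    have r1 : seqProd y (a + 1) (l + 1) = seqProd y (a + 1) l * y (a + 1 + l + 1) := by
      rw [seqProd_succ]; ring_nf
    have r2 : seqProd y a (l + 1) = seqProd y a l * y (a + 1 + l) := by
      rw [seqProd_succ]
    have r3 : a + 1 + (l + 1) = a + 1 + l + 1 := by omega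
    rw [r1, r2, r3]
    exact this

/-- If `xᵢ * y_{i+1} = yᵢ * x_{i+1}` is a right lcm of `xᵢ` and `yᵢ` for every `i ≥ 1`, then
`(x₁ ⋯ x_k) * (y_{k+1} ⋯ y_{k+ℓ}) = (y₁ ⋯ y_ℓ) * (x_{ℓ+1} ⋯ x_{ℓ+k})` is a right lcm of
`x₁ ⋯ x_k` and `y₁ ⋯ y_ℓ`. -/
theorem seqProd_isRightLcm {G : Type*} [Group G] (M : Submonoid G) (x y : ℕ → G)
    (hx : ∀ i, 1 ≤ i → x i ∈ M) (hy : ∀ i, 1 ≤ i → y i ∈ M)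
    (hrel : ∀ i, 1 ≤ i → x i * y (i + 1) = y i * x (i + 1))
    (hlcm : ∀ i, 1 ≤ i → IsRightLcmIn M (x i) (y i) (x i * y (i + 1)))
    (k l : ℕ) (hk : 1 ≤ k) (hl : 1 ≤ l) :
    seqProd x 0 k * seqProd y k l = seqProd y 0 l * seqProd x l k ∧
      IsRightLcmIn M (seqProd x 0 k) (seqProd y 0 l) (seqProd x 0 k * seqProd y k l) := by
  induction k, hk using Nat.le_induction with
  | base =>
    obtain ⟨e, h⟩ := row hx hy hrel hlcm 0 l hl
    rw [seqProd_one, seqProd_one, show l + 1 = 1 + l by omega]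
    constructor
    · simpa using e
    · simpa using h
  | succ k hk ih =>
    obtain ⟨e, h⟩ := ih
    -- swap: lcm of Y_l and X_k, value Y_l * seqProd x l k
    have h1 : IsRightLcmIn M (seqProd y 0 l) (seqProd x 0 k)
        (seqProd y 0 l * seqProd x l k) := by rw [← e]; exact h.swap
    obtain ⟨e2, h2⟩ := row hx hy hrel hlcm k l hl
    have h2' : IsRightLcmIn M (seqProd y k l) (x (k + 1))
        (seqProd y k l * x (k + 1 + l)) := by rw [← e2]; exact h2.swap
    have := lcm_ext (M := M) (x := seqProd y 0 l) (y₁ := seqProd x 0 k)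
      (y₂ := x (k + 1)) (a := seqProd x l k) (b := x (k + 1 + l))
      (c := seqProd y k l) (d := seqProd y (k + 1) l)
      (seqProd_mem hx _ _) (hx _ (by omega)) (seqProd_mem hy _ _)
      (seqProd_mem hy _ _) (hx _ (by omega)) e.symm e2.symm h1 h2'
    obtain ⟨E, H⟩ := this
    have r1 : seqProd x l (k + 1) = seqProd x l k * x (k + 1 + l) := by
      rw [seqProd_succ]; ring_nf
    have r2 : seqProd x 0 (k + 1) = seqProd x 0 k * x (k + 1) := by
      rw [seqProd_succ]; ring_nf
    rw [r1, r2]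
    refine ⟨by rw [← E], ?_⟩
    have H' := H.swap
    rwa [E] at H'
end

section
/- Let G be a group and let (xᵢ)ᵢ≥1 and (yᵢ)ᵢ≥1 be sequences of elements of G satisfying xᵢ * y_{i+1} = yᵢ * x_{i+1} for every i ≥ 1. Set z = x₁ * y₁⁻¹. Then for every positive integer k, one has z^k = (x₁ ⋯ x_k) * (y₁ ⋯ y_k)⁻¹. -/
/-- If `xᵢ * y_{i+1} = yᵢ * x_{i+1}` for all `i ≥ 1` and `z = x₁ * y₁⁻¹`, then
`z ^ k = (x₁ ⋯ x_k) * (y₁ ⋯ y_k)⁻¹` for every `k ≥ 1`. -/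
theorem power_formula {G : Type*} [Group G] (x y : ℕ → G)
    (hrel : ∀ i, 1 ≤ i → x i * y (i + 1) = y i * x (i + 1))
    (z : G) (hz : z = x 1 * (y 1)⁻¹) (k : ℕ) (hk : 1 ≤ k) :
    z ^ k = seqProd x 0 k * (seqProd y 0 k)⁻¹ := by
  have hsucc : ∀ (w : ℕ → G) (k : ℕ),
      seqProd w 0 (k + 1) = seqProd w 0 k * w (k + 1) := by
    intro w k
    simp [seqProd, List.range_succ, Nat.add_comm]
  -- conjugation lemma
  have key : ∀ k : ℕ,
      (seqProd y 0 k)⁻¹ * z * seqProd y 0 k = x (k + 1) * (y (k + 1))⁻¹ := by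
    intro k
    induction k with
    | zero => simp [seqProd, hz]
    | succ n ih =>
        rw [hsucc, mul_inv_rev]
        have h1 : (y (n + 1))⁻¹ * ((seqProd y 0 n)⁻¹ * z * seqProd y 0 n) * y (n + 1)
            = (y (n + 1))⁻¹ * (x (n + 1) * (y (n + 1))⁻¹) * y (n + 1) := by rw [ih]
        have h2 : (y (n + 1))⁻¹ * x (n + 1) = x (n + 2) * (y (n + 2))⁻¹ := by
          have h := hrel (n + 1) (Nat.le_add_left 1 n)
          rw [inv_mul_eq_iff_eq_mul, ← mul_assoc, ← h, mul_assoc, mul_inv_cancel, mul_one]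
        calc (y (n + 1))⁻¹ * (seqProd y 0 n)⁻¹ * z * (seqProd y 0 n * y (n + 1))
            = (y (n + 1))⁻¹ * ((seqProd y 0 n)⁻¹ * z * seqProd y 0 n) * y (n + 1) := by
              group
          _ = (y (n + 1))⁻¹ * (x (n + 1) * (y (n + 1))⁻¹) * y (n + 1) := h1
          _ = (y (n + 1))⁻¹ * x (n + 1) := by group
          _ = x (n + 1 + 1) * (y (n + 1 + 1))⁻¹ := h2
  have main : ∀ k : ℕ, z ^ (k + 1) = seqProd x 0 (k + 1) * (seqProd y 0 (k + 1))⁻¹ := by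
    intro k
    induction k with
    | zero => simp [seqProd, hz, List.range_succ]
    | succ n ih =>
        have hk := key (n + 1)
        rw [pow_succ, ih]
        have : z * seqProd y 0 (n + 1) = seqProd y 0 (n + 1) * (x (n + 2) * (y (n + 2))⁻¹) := by
          rw [← hk]; group
        calc seqProd x 0 (n + 1) * (seqProd y 0 (n + 1))⁻¹ * z
            = seqProd x 0 (n + 1) * (seqProd y 0 (n + 1))⁻¹ *
              (z * seqProd y 0 (n + 1)) * (seqProd y 0 (n + 1))⁻¹ := by group
          _ = seqProd x 0 (n + 1) * (seqProd y 0 (n + 1))⁻¹ *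
              (seqProd y 0 (n + 1) * (x (n + 2) * (y (n + 2))⁻¹)) * (seqProd y 0 (n + 1))⁻¹ := by
              rw [this]
          _ = seqProd x 0 (n + 1) * x (n + 1 + 1) *
              ((y (n + 1 + 1))⁻¹ * (seqProd y 0 (n + 1))⁻¹) := by group
          _ = seqProd x 0 (n + 1 + 1) * (seqProd y 0 (n + 1 + 1))⁻¹ := by
              rw [hsucc x (n + 1), hsucc y (n + 1), mul_inv_rev]
  obtain ⟨m, rfl⟩ := Nat.exists_eq_add_of_le hk
  simpa [Nat.add_comm] using main m
end

section
/- In the presented group G = ⟨x, y ∣ x² = y²⟩ (the quotient of the free group on two generators x, y by the normal closure of x² * y⁻²), the images of the generators x and y are not conjugate: there is no g in G with g * x * g⁻¹ = y. -/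
/-- The single relator `x² * y⁻²` for the presentation `⟨x, y ∣ x² = y²⟩`,
with `x = FreeGroup.of 0` and `y = FreeGroup.of 1`. -/
def sqRel : Set (FreeGroup (Fin 2)) :=
  {FreeGroup.of 0 ^ 2 * (FreeGroup.of 1 ^ 2)⁻¹}

/-- Map generators to `i` and `j` in the quaternion group `Q₈`. -/
def sqF : Fin 2 → QuaternionGroup 2 :=
  ![QuaternionGroup.a 1, QuaternionGroup.xa 0]

theorem sqF_rel : ∀ r ∈ sqRel, FreeGroup.lift sqF r = 1 := by
  intro r hr
  simp only [sqRel, Set.mem_singleton_iff] at hr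
  subst hr
  simp only [map_mul, map_inv, map_pow, FreeGroup.lift_apply_of, sqF]
  decide

/-- In the presented group `⟨x, y ∣ x² = y²⟩`, the generators `x` and `y` are not
conjugate. -/
theorem not_conjugate_in_sq_presented_group :
    ¬ ∃ g : PresentedGroup sqRel,
        g * PresentedGroup.of (0 : Fin 2) * g⁻¹ = PresentedGroup.of (1 : Fin 2) := by
  rintro ⟨g, hg⟩
  have h := congrArg (PresentedGroup.toGroup sqF_rel) hg
  simp only [map_mul, map_inv, PresentedGroup.toGroup.of] at h
  revert h
  have : ∀ q : QuaternionGroup 2, q * sqF 0 * q⁻¹ ≠ sqF 1 := by decide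
  exact this _
end
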